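/- arXiv:1306.4949 — 4 statements merged into one kernel-verified Lean document; each statement's English description precedes it below -/
import Mathlib

section
/- Let X(τ) be a Markov chain on a finite state space V in which every state in a set S ⊆ V is absorbing. For fixed initial state i, target state j, and time τ, the function g(S) = Pr(X(τ) = j and X(r) ∉ S for all 0 ≤ r ≤ τ | X(0) = i) is supermodular as a function of S (over sets S with i ∉ S, j ∉ S). -/
open Finset

/-- Probability that a Markov chain with one-step transition matrix `P`, started at `i`,
follows a path of length `τ` that avoids the set `S` at every step and ends at `j`.
(When every state of `S` is absorbing, this equals
`Pr(X(τ) = j and X(r) ∉ S for all 0 ≤ r ≤ τ | X(0) = i)`.) -/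
noncomputable def avoidProb {V : Type*} [DecidableEq V] [Fintype V]
    (P : V → V → ℝ) (τ : ℕ) (i j : V) (S : Finset V) : ℝ :=
  ∑ p ∈ Finset.univ.filter
      (fun p : Fin (τ + 1) → V =>
        p 0 = i ∧ p (Fin.last τ) = j ∧ ∀ r : Fin (τ + 1), p r ∉ S),
    ∏ r : Fin τ, P (p r.castSucc) (p r.succ)

/-- with every state of `S` absorbing, the function
`g(S) = Pr(X(τ) = j ∧ X(r) ∉ S ∀ 0 ≤ r ≤ τ | X(0) = i)` is supermodular in `S`
(over sets not containing `i` or `j`). -/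
theorem avoidProb_supermodular {V : Type*} [DecidableEq V] [Fintype V]
    (P : V → V → ℝ) (hP_nonneg : ∀ a b, 0 ≤ P a b)
    (hP_stoch : ∀ a, ∑ b, P a b = 1)
    (τ : ℕ) (i j : V) :
    ∀ S T : Finset V, S ⊆ T → ∀ u ∉ T,
      i ∉ insert u T → j ∉ insert u T →
      avoidProb P τ i j S - avoidProb P τ i j (insert u S) ≥
      avoidProb P τ i j T - avoidProb P τ i j (insert u T) := by
  classical
  intro S T hST u huT hi hj
  set A : Finset V → Finset (Fin (τ + 1) → V) := fun W =>
    Finset.univ.filter (fun p : Fin (τ + 1) → V =>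
      p 0 = i ∧ p (Fin.last τ) = j ∧ ∀ r : Fin (τ + 1), p r ∉ W) with hA
  have hsub : ∀ W : Finset V, A (insert u W) ⊆ A W := by
    intro W p hp
    simp only [hA, Finset.mem_filter, Finset.mem_univ, true_and] at hp ⊢
    exact ⟨hp.1, hp.2.1, fun r hr => hp.2.2 r (Finset.mem_insert_of_mem hr)⟩
  have hdiff : ∀ W : Finset V,
      avoidProb P τ i j W - avoidProb P τ i j (insert u W) =
      ∑ p ∈ A W \ A (insert u W), ∏ r : Fin τ, P (p r.castSucc) (p r.succ) := by
    intro W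
    have := Finset.sum_sdiff (f := fun p : Fin (τ + 1) → V =>
      ∏ r : Fin τ, P (p r.castSucc) (p r.succ)) (hsub W)
    have e : ∀ W' : Finset V, avoidProb P τ i j W' =
        ∑ p ∈ A W', ∏ r : Fin τ, P (p r.castSucc) (p r.succ) := by
      intro W'
      unfold avoidProb
      rw [hA]
    rw [e W, e (insert u W)]
    linarith [this]
  rw [hdiff S, hdiff T]
  apply Finset.sum_le_sum_of_subset_of_nonneg
  · intro p hp
    simp only [Finset.mem_sdiff, hA, Finset.mem_filter, Finset.mem_univ, true_and] at hp ⊢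
    obtain ⟨⟨h0, hl, hT⟩, hnot⟩ := hp
    refine ⟨⟨h0, hl, fun r hr => hT r (hST hr)⟩, ?_⟩
    rintro ⟨-, -, hins⟩
    apply hnot
    refine ⟨h0, hl, fun r hr => ?_⟩
    rcases Finset.mem_insert.mp hr with h | h
    · exact hins r (h ▸ Finset.mem_insert_self u S)
    · exact hT r h
  · intro p _ _
    exact Finset.prod_nonneg fun r _ => hP_nonneg _ _
end

section
/- Let f : 2^V → ℝ≥0 be a nondecreasing submodular function on subsets of a finite set V with f(∅) = 0. The greedy algorithm that, starting from S = ∅, iteratively adds v maximizing f(S ∪ {v}) - f(S) for k iterations returns a set S' with f(S') ≥ (1 - 1/e) max{f(S) : |S| ≤ k}. -/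
open Finset

/-- the greedy algorithm for maximizing a nonnegative, nondecreasing,
submodular set function `f` with `f ∅ = 0`, run for `k` iterations, returns a set whose
value is at least `(1 - 1/e)` times the optimum over sets of cardinality at most `k`.
The greedy run is encoded as a chain `S 0 = ∅`, `S (j+1) = insert (v j) (S j)` where
`v j` maximizes the marginal gain. -/
theorem greedy_submodular_max {V : Type*} [DecidableEq V] [Fintype V]
    (f : Finset V → ℝ)
    (hf_nonneg : ∀ S : Finset V, 0 ≤ f S)
    (hf_mono : ∀ S T : Finset V, S ⊆ T → f S ≤ f T)
    (hf_submod : ∀ S T : Finset V, S ⊆ T → ∀ v ∉ T,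
      f (insert v S) - f S ≥ f (insert v T) - f T)
    (hf_empty : f ∅ = 0)
    (k : ℕ) (S : ℕ → Finset V) (v : ℕ → V)
    (hS0 : S 0 = ∅)
    (hstep : ∀ j, S (j + 1) = insert (v j) (S j))
    (hgreedy : ∀ j, ∀ u : V, f (insert u (S j)) - f (S j) ≤
      f (insert (v j) (S j)) - f (S j)) :
    ∀ T : Finset V, T.card ≤ k →
      f (S k) ≥ (1 - 1 / Real.exp 1) * f T := by
  intro T hT
  -- submodular sum of marginals bound
  have hmarg : ∀ (T0 A : Finset V),
      f (A ∪ T0) - f A ≤ ∑ u ∈ T0, (f (insert u A) - f A) := by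
    intro T0
    induction T0 using Finset.induction_on with
    | empty => intro A; simp
    | @insert u T0 hu ih =>
      intro A
      rw [Finset.sum_insert hu]
      have h1 : f (insert u (A ∪ T0)) - f (A ∪ T0) ≤ f (insert u A) - f A := by
        by_cases huA : u ∈ A ∪ T0
        · have huA' : u ∈ A := by
            rcases Finset.mem_union.1 huA with h | h
            · exact h
            · exact absurd h hu
          rw [Finset.insert_eq_self.2 huA, Finset.insert_eq_self.2 huA']
          simp
        · exact hf_submod A (A ∪ T0) Finset.subset_union_left u huA
      have h2 := ih A
      have h3 : A ∪ insert u T0 = insert u (A ∪ T0) := by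
        rw [Finset.union_insert]
      rw [h3]
      linarith
  rcases Nat.eq_zero_or_pos k with hk0 | hk
  · subst hk0
    have hTe : T = ∅ := Finset.card_eq_zero.1 (Nat.le_zero.1 hT)
    subst hTe
    rw [hf_empty, hS0, hf_empty]
    simp
  have hkR : (0 : ℝ) < k := by exact_mod_cast hk
  have hk1 : (1 : ℝ) ≤ k := by exact_mod_cast hk
  have hr : (0 : ℝ) ≤ 1 - 1 / k := by
    rw [sub_nonneg]
    rw [div_le_one hkR]
    exact hk1
  have hδ_nonneg : ∀ j, 0 ≤ f (S (j + 1)) - f (S j) := by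
    intro j
    have := hf_mono (S j) (S (j + 1)) (by rw [hstep]; exact Finset.subset_insert _ _)
    linarith
  have key : ∀ j, f T - f (S (j + 1)) ≤ (1 - 1 / k) * (f T - f (S j)) := by
    intro j
    have h1 : f T ≤ f (S j ∪ T) := hf_mono T _ Finset.subset_union_right
    have h2 := hmarg T (S j)
    have h3 : ∑ u ∈ T, (f (insert u (S j)) - f (S j)) ≤
        (T.card : ℝ) * (f (S (j + 1)) - f (S j)) := by
      calc ∑ u ∈ T, (f (insert u (S j)) - f (S j))
          ≤ ∑ _u ∈ T, (f (S (j + 1)) - f (S j)) := by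
            apply Finset.sum_le_sum
            intro u _
            rw [hstep j]
            exact hgreedy j u
        _ = (T.card : ℝ) * (f (S (j + 1)) - f (S j)) := by
            rw [Finset.sum_const, nsmul_eq_mul]
    have h4 : (T.card : ℝ) * (f (S (j + 1)) - f (S j)) ≤
        (k : ℝ) * (f (S (j + 1)) - f (S j)) := by
      apply mul_le_mul_of_nonneg_right _ (hδ_nonneg j)
      exact_mod_cast hT
    have h5 : f T - f (S j) ≤ (k : ℝ) * (f (S (j + 1)) - f (S j)) := by linarith
    rw [one_sub_div (ne_of_gt hkR), div_mul_eq_mul_div, le_div_iff₀ hkR]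
    linarith [h5]
  have hind : ∀ j, f T - f (S j) ≤ (1 - 1 / (k : ℝ)) ^ j * f T := by
    intro j
    induction j with
    | zero => simp [hS0, hf_empty]
    | succ n ih =>
      calc f T - f (S (n + 1)) ≤ (1 - 1 / k) * (f T - f (S n)) := key n
        _ ≤ (1 - 1 / k) * ((1 - 1 / k) ^ n * f T) := mul_le_mul_of_nonneg_left ih hr
        _ = (1 - 1 / k) ^ (n + 1) * f T := by ring
  have h6 : (1 - 1 / (k : ℝ)) ≤ Real.exp (-(1 / k)) := by
    have := Real.add_one_le_exp (-(1 / (k : ℝ)))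
    linarith
  have h7 : (1 - 1 / (k : ℝ)) ^ k ≤ Real.exp (-(1 / k)) ^ k :=
    pow_le_pow_left₀ hr h6 k
  have h8 : Real.exp (-(1 / (k : ℝ))) ^ k = Real.exp (-1) := by
    rw [← Real.exp_nat_mul]
    congr 1
    field_simp
  have h9 : (1 - 1 / (k : ℝ)) ^ k * f T ≤ Real.exp (-1) * f T := by
    rw [← h8]
    exact mul_le_mul_of_nonneg_right h7 (hf_nonneg T)
  have h10 := hind k
  have h11 : Real.exp (-1) = 1 / Real.exp 1 := by
    rw [Real.exp_neg, one_div]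
  rw [h11] at h9
  nlinarith [h9, h10]
end

section
/- Suppose a greedy algorithm for maximizing a nonnegative nondecreasing submodular function f incurs additive error R_j at step j, i.e., max_v f(S_{j-1} ∪ {v}) - f(S_{j-1} ∪ {v_j}) ≤ R_j. Then the output S after k steps satisfies f(S) ≥ (1 - 1/e) f(S*) - Σ_{j=1}^k R_j, where S* is an optimal set of size k. -/
open Finset

/-- Telescoping bound from submodularity: `f (A ∪ T) ≤ f A + ∑_{u ∈ T} (f (A∪{u}) - f A)`. -/
lemma submod_telescope {V : Type*} [DecidableEq V]
    (f : Finset V → ℝ)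
    (hf_submod : ∀ S T : Finset V, S ⊆ T → ∀ v ∉ T,
      f (insert v S) - f S ≥ f (insert v T) - f T)
    (A : Finset V) :
    ∀ T : Finset V, f (A ∪ T) ≤ f A + ∑ u ∈ T, (f (insert u A) - f A) := by
  intro T
  induction T using Finset.induction_on with
  | empty => simp
  | @insert a T ha ih =>
    rw [Finset.sum_insert ha]
    by_cases haA : a ∈ A ∪ T
    · have h1 : A ∪ insert a T = A ∪ T := by
        ext x; simp only [Finset.mem_union, Finset.mem_insert]
        constructor
        · rintro (h | rfl | h)
          · exact Or.inl h
          · simpa using haA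
          · exact Or.inr h
        · rintro (h | h)
          · exact Or.inl h
          · exact Or.inr (Or.inr h)
      rcases Finset.mem_union.mp haA with hA | hT
      · rw [h1, Finset.insert_eq_self.mpr hA]
        linarith [ih]
      · exact absurd hT ha
    · have hsub := hf_submod A (A ∪ T) Finset.subset_union_left a haA
      rw [Finset.union_insert]
      linarith [ih]

/-- approximate greedy maximization of a nonnegative, nondecreasing
submodular function `f` with `f ∅ = 0`.  If at step `j` the element `v j` added is
within additive error `R j` of the best marginal gain, then after `k` steps
`f(S k) ≥ (1 - 1/e) f(S*) - Σ_{j=1}^k R_j` where `S*` is an optimal set of size `k`. -/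
theorem greedy_with_errors {V : Type*} [DecidableEq V] [Fintype V]
    (f : Finset V → ℝ)
    (hf_nonneg : ∀ S : Finset V, 0 ≤ f S)
    (hf_mono : ∀ S T : Finset V, S ⊆ T → f S ≤ f T)
    (hf_submod : ∀ S T : Finset V, S ⊆ T → ∀ v ∉ T,
      f (insert v S) - f S ≥ f (insert v T) - f T)
    (hf_empty : f ∅ = 0)
    (k : ℕ) (S : ℕ → Finset V) (v : ℕ → V) (R : ℕ → ℝ)
    (hS0 : S 0 = ∅)
    (hstep : ∀ j, S (j + 1) = insert (v j) (S j))
    (herr : ∀ j < k, ∀ u : V,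
      f (insert u (S j)) - f (insert (v j) (S j)) ≤ R (j + 1))
    (Sstar : Finset V) (hSstar_card : Sstar.card ≤ k)
    (hSstar_opt : ∀ T : Finset V, T.card ≤ k → f T ≤ f Sstar) :
    f (S k) ≥ (1 - 1 / Real.exp 1) * f Sstar - ∑ j ∈ Finset.Icc 1 k, R j := by
  rcases Nat.eq_zero_or_pos k with hk0 | hkpos
  · subst hk0
    have : Sstar = ∅ := Finset.card_eq_zero.mp (Nat.le_zero.mp hSstar_card)
    simp [this, hS0, hf_empty]
  -- R nonneg
  have hRpos : ∀ j < k, 0 ≤ R (j + 1) := by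
    intro j hj
    have := herr j hj (v j)
    linarith
  have hkR : (k : ℝ) > 0 := Nat.cast_pos.mpr hkpos
  obtain ⟨c, hc⟩ : ∃ c : ℝ, c = 1 - 1 / (k : ℝ) := ⟨_, rfl⟩
  have hc0 : 0 ≤ c := by
    have h : 1 / (k : ℝ) ≤ 1 := by
      rw [div_le_one hkR]; exact_mod_cast hkpos
    rw [hc]; linarith
  have hc1 : c ≤ 1 := by
    have h : 0 ≤ 1 / (k : ℝ) := by positivity
    rw [hc]; linarith
  -- key per-step bound
  have hkey : ∀ j < k, f Sstar - f (S (j + 1)) ≤ c * (f Sstar - f (S j)) + R (j + 1) := by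
    intro j hj
    obtain ⟨g, hgdef⟩ : ∃ g : ℝ, g = f (S (j + 1)) - f (S j) := ⟨_, rfl⟩
    have hg : ∀ u : V, f (insert u (S j)) - f (S j) ≤ g + R (j + 1) := by
      intro u
      have := herr j hj u
      rw [hstep j] at hgdef
      linarith
    have hgR : 0 ≤ g + R (j + 1) := by
      have hmono := hf_mono (S j) (insert (v j) (S j)) (Finset.subset_insert _ _)
      rw [hstep j] at hgdef
      have hR := hRpos j hj
      linarith
    have htel := submod_telescope f hf_submod (S j) Sstar
    have hsum : ∑ u ∈ Sstar, (f (insert u (S j)) - f (S j))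
        ≤ ∑ _u ∈ Sstar, (g + R (j + 1)) := Finset.sum_le_sum fun u _ => hg u
    have hcard : ∑ _u ∈ Sstar, (g + R (j + 1)) = (Sstar.card : ℝ) * (g + R (j + 1)) := by
      rw [Finset.sum_const, nsmul_eq_mul]
    have hle : f Sstar - f (S j) ≤ (k : ℝ) * (g + R (j + 1)) := by
      have h1 : f Sstar ≤ f (S j ∪ Sstar) := hf_mono _ _ Finset.subset_union_right
      have h2 : (Sstar.card : ℝ) * (g + R (j + 1)) ≤ (k : ℝ) * (g + R (j + 1)) :=
        mul_le_mul_of_nonneg_right (by exact_mod_cast hSstar_card) hgR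
      linarith [htel]
    have hdiv : (f Sstar - f (S j)) / (k : ℝ) ≤ g + R (j + 1) := by
      rw [div_le_iff₀ hkR]; linarith [hle]
    have hexp : c * (f Sstar - f (S j)) + R (j + 1) - (f Sstar - f (S (j + 1)))
        = (g + R (j + 1)) - (f Sstar - f (S j)) / (k : ℝ) := by
      rw [hc, hgdef]
      field_simp
      ring
    linarith [hexp, hdiv]
  -- induction: δ j ≤ c^j * f Sstar + ∑_{i=1}^j R i
  have hind : ∀ j ≤ k, f Sstar - f (S j) ≤ c ^ j * f Sstar + ∑ i ∈ Finset.Icc 1 j, R i := by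
    intro j
    induction j with
    | zero => intro _; simp [hS0, hf_empty]
    | succ j ih =>
      intro hjk
      have hj : j < k := hjk
      have hih := ih (Nat.le_of_lt hj)
      have hkj := hkey j hj
      have hsumnn : 0 ≤ ∑ i ∈ Finset.Icc 1 j, R i := by
        apply Finset.sum_nonneg
        intro i hi
        simp only [Finset.mem_Icc] at hi
        obtain ⟨h1, h2⟩ := hi
        obtain ⟨i', rfl⟩ := Nat.exists_eq_add_of_le h1
        simpa [Nat.add_comm] using hRpos i' (by omega)
      have hsucc : ∑ i ∈ Finset.Icc 1 (j + 1), R i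
          = ∑ i ∈ Finset.Icc 1 j, R i + R (j + 1) := by
        rw [Finset.sum_Icc_succ_top (by omega)]
      have hcs : c * (∑ i ∈ Finset.Icc 1 j, R i) ≤ ∑ i ∈ Finset.Icc 1 j, R i := by
        nlinarith
      rw [hsucc, pow_succ]
      nlinarith [mul_le_mul_of_nonneg_left hih hc0]
  -- combine with (1 - 1/k)^k ≤ 1/e
  have hck : c ^ k ≤ 1 / Real.exp 1 := by
    have h1 : c ≤ Real.exp (-(1 / (k : ℝ))) := by
      have := Real.add_one_le_exp (-(1 / (k : ℝ)))
      linarith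
    have h2 : c ^ k ≤ Real.exp (-(1 / (k : ℝ))) ^ k :=
      pow_le_pow_left₀ hc0 h1 k
    have h3 : Real.exp (-(1 / (k : ℝ))) ^ k = Real.exp (-1) := by
      rw [← Real.exp_nat_mul]
      congr 1
      field_simp
    rw [h3, Real.exp_neg] at h2
    rw [one_div]
    exact h2
  have hfin := hind k le_rfl
  have hfs : 0 ≤ f Sstar := hf_nonneg _
  have : c ^ k * f Sstar ≤ (1 / Real.exp 1) * f Sstar :=
    mul_le_mul_of_nonneg_right hck hfs
  linarith
end

section
/- Let W be a symmetric nonnegative weight matrix on a graph with leader set S, and let x(t) evolve by ẋ = -Lx with leader states fixed. Then the convergence error f_t(S) = (Σ_{i∈V} min_{y∈Ā} |x_i(t) - y|^p)^{1/p} is nonincreasing in t: for any t₀ > 0 and t ≥ t₀, f_t(S) ≤ f_{t₀}(S). -/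
/-!
Over `[t₀, t]` the state is transported by `Q = exp (-(t - t₀) L)`. Since `-L` has nonnegative
off-diagonal entries and zero row sums, `Q` is row-stochastic; leader rows of `L` vanish, so leader
rows of `Q` are identity rows, and the follower block of `Q` is the exponential of the symmetric
follower block of `L`, hence symmetric. Distance to the convex set `Ā` is a convex function, so by
Jensen `d(x_i(t), Ā)^p ≤ ∑ⱼ Q i j d(x_j(t₀), Ā)^p`. Summing over `i`, leader terms vanish (leaders
sit in `Ā`), and by symmetry each follower column of `Q` sums to at most its row sum `1`.
-/

open Finset Matrix Metric NormedSpace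

variable {ι : Type*} [Fintype ι] [DecidableEq ι]

namespace Matrix

theorem hasSum_exp (A : Matrix ι ι ℝ) :
    HasSum (fun k : ℕ => (k.factorial : ℝ)⁻¹ • A ^ k) (exp A) := by
  open scoped Norms.Operator in
  exact exp_series_hasSum_exp' A

theorem hasSum_exp_apply (A : Matrix ι ι ℝ) (i j : ι) :
    HasSum (fun k : ℕ => (k.factorial : ℝ)⁻¹ * (A ^ k) i j) (exp A i j) :=
  Pi.hasSum.mp (Pi.hasSum.mp (hasSum_exp A) i) j

theorem exp_smul_one (c : ℝ) : exp (c • (1 : Matrix ι ι ℝ)) = Real.exp c • 1 := by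
  open scoped Norms.Operator in
  rw [Real.exp_eq_exp_ℝ, ← Algebra.algebraMap_eq_smul_one, ← Algebra.algebraMap_eq_smul_one,
    algebraMap_exp_comm]
  rfl

theorem exp_apply_nonneg_of_nonneg {A : Matrix ι ι ℝ} (hA : ∀ i j, 0 ≤ A i j) (i j : ι) :
    0 ≤ exp A i j :=
  (hasSum_exp_apply A i j).nonneg fun k => mul_nonneg (by positivity) (pow_apply_nonneg hA k i j)

theorem exp_apply_nonneg {A : Matrix ι ι ℝ} (hA : ∀ i j, i ≠ j → 0 ≤ A i j) (i j : ι) :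
    0 ≤ exp A i j := by
  set c := ∑ m, |A m m|
  have hshift : ∀ i j, 0 ≤ (A + c • 1) i j := by
    intro i j
    rcases eq_or_ne i j with rfl | hij
    · have : |A i i| ≤ c := single_le_sum (f := fun m => |A m m|) (fun _ _ => abs_nonneg _)
        (mem_univ i)
      simp only [add_apply, smul_apply, one_apply_eq, smul_eq_mul, mul_one]
      linarith [neg_abs_le (A i i)]
    · simpa [one_apply_ne hij] using hA i j hij
  have hsplit : exp A = Real.exp (-c) • exp (A + c • 1) := by
    rw [← smul_one_mul, ← exp_smul_one,
      ← exp_add_of_commute _ _ ((Commute.one_left _).smul_left _), neg_smul]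
    congr 1
    abel
  rw [hsplit, smul_apply, smul_eq_mul]
  exact mul_nonneg (Real.exp_nonneg _) (exp_apply_nonneg_of_nonneg hshift i j)

theorem exp_mulVec_of_mulVec_eq_zero {A : Matrix ι ι ℝ} {v : ι → ℝ} (hv : A *ᵥ v = 0) :
    exp A *ᵥ v = v := by
  have hpow : ∀ k, k ≠ 0 → A ^ k *ᵥ v = 0 := by
    rintro (_ | k) hk
    · exact absurd rfl hk
    · rw [pow_succ, ← mulVec_mulVec, hv, mulVec_zero]
  refine ((hasSum_exp A).map (mulVec.addMonoidHomLeft v)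
    (continuous_id.matrix_mulVec continuous_const)).unique ?_
  have h := hasSum_single (f := fun k : ℕ => (k.factorial : ℝ)⁻¹ • (A ^ k *ᵥ v)) 0
    fun k hk => by simp only [hpow k hk, smul_zero]
  simp only [pow_zero, one_mulVec, Nat.factorial_zero, Nat.cast_one, inv_one, one_smul] at h
  convert h using 2 with k
  exact smul_mulVec _ _ _

theorem vecMul_exp_of_vecMul_eq_zero {A : Matrix ι ι ℝ} {v : ι → ℝ} (hv : v ᵥ* A = 0) :
    v ᵥ* exp A = v := by
  rw [← mulVec_transpose, ← exp_transpose,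
    exp_mulVec_of_mulVec_eq_zero (by rwa [mulVec_transpose])]

theorem exp_row_of_row_eq_zero {A : Matrix ι ι ℝ} {i : ι} (hA : A i = 0) :
    exp A i = (1 : Matrix ι ι ℝ) i := by
  have h := vecMul_exp_of_vecMul_eq_zero (A := A) (v := Pi.single i 1)
    (by rwa [single_one_vecMul])
  rwa [single_one_vecMul, ← vecMul_one (Pi.single i 1), single_one_vecMul] at h

theorem exp_mem_rowStochastic {A : Matrix ι ι ℝ} (hA : ∀ i j, i ≠ j → 0 ≤ A i j)
    (h1 : A *ᵥ 1 = 0) : exp A ∈ rowStochastic ℝ ι :=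
  ⟨exp_apply_nonneg hA, exp_mulVec_of_mulVec_eq_zero h1⟩

section Block

variable {p : ι → Prop} [DecidablePred p]

theorem toBlock_pow_self {A : Matrix ι ι ℝ} (hA : A.toBlock (fun i => ¬ p i) p = 0) (k : ℕ) :
    (A ^ k).toBlock p p = A.toBlock p p ^ k := by
  induction k with
  | zero => exact toBlock_one_self p
  | succ k ih =>
    rw [pow_succ, toBlock_mul_eq_add p p p, hA, Matrix.mul_zero, add_zero, ih, pow_succ]

theorem toBlock_exp_self {A : Matrix ι ι ℝ} (hA : A.toBlock (fun i => ¬ p i) p = 0) :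
    (exp A).toBlock p p = exp (A.toBlock p p) := by
  ext i j
  refine (hasSum_exp_apply A i j).unique ?_
  simpa [← toBlock_pow_self hA] using hasSum_exp_apply (A.toBlock p p) i j

end Block

end Matrix

theorem convexOn_infDist {E : Type*} [NormedAddCommGroup E] [NormedSpace ℝ E] {K : Set E}
    (hK : Convex ℝ K) : ConvexOn ℝ Set.univ (infDist · K) := by
  refine ⟨convex_univ, fun x _ y _ a b ha hb hab => ?_⟩
  rcases K.eq_empty_or_nonempty with rfl | hne
  · simp
  refine le_of_forall_pos_le_add fun ε hε => ?_
  obtain ⟨u, hu, hxu⟩ := (infDist_lt_iff hne).1 (lt_add_of_pos_right (infDist x K) hε)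
  obtain ⟨v, hv, hyv⟩ := (infDist_lt_iff hne).1 (lt_add_of_pos_right (infDist y K) hε)
  calc infDist (a • x + b • y) K ≤ dist (a • x + b • y) (a • u + b • v) :=
        infDist_le_dist_of_mem (hK hu hv ha hb hab)
    _ ≤ a * dist x u + b * dist y v := by
        refine (dist_add_add_le _ _ _ _).trans_eq ?_
        rw [dist_smul₀, dist_smul₀, Real.norm_of_nonneg ha, Real.norm_of_nonneg hb]
    _ ≤ a * (infDist x K + ε) + b * (infDist y K + ε) := by gcongr
    _ = a • infDist x K + b • infDist y K + ε := by
        rw [smul_eq_mul, smul_eq_mul]; linear_combination ε * hab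

theorem sInf_image_dist_rpow {α : Type*} [PseudoMetricSpace α] {K : Set α} (hK : IsCompact K)
    {p : ℝ} (hp : 0 < p) (a : α) :
    sInf ((fun y => dist a y ^ p) '' K) = infDist a K ^ p := by
  rcases K.eq_empty_or_nonempty with rfl | hne
  · simp [Real.zero_rpow hp.ne']
  obtain ⟨y₀, hy₀, hdist⟩ := hK.exists_infDist_eq_dist hne a
  refine IsLeast.csInf_eq ⟨⟨y₀, hy₀, by rw [hdist]⟩, ?_⟩
  rintro _ ⟨y, hy, rfl⟩
  exact Real.rpow_le_rpow infDist_nonneg (infDist_le_dist_of_mem hy) hp.le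

theorem sum_infDist_mulVec_rpow_le {K : Set ℝ} (hK : Convex ℝ K) {p : ℝ} (hp : 1 ≤ p)
    {Q : Matrix ι ι ℝ} (hQ : Q ∈ rowStochastic ℝ ι) {z : ι → ℝ}
    (hcol : ∀ j, z j ∉ K → ∑ i, Q i j ≤ 1) :
    ∑ i, infDist ((Q *ᵥ z) i) K ^ p ≤ ∑ j, infDist (z j) K ^ p := by
  set d := fun j => infDist (z j) K
  have hrow (i : ι) : ∑ j, Q i j = 1 := sum_row_of_mem_rowStochastic hQ i
  have hpoint (i : ι) : infDist ((Q *ᵥ z) i) K ^ p ≤ ∑ j, Q i j * d j ^ p := calc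
    _ ≤ (∑ j, Q i j * d j) ^ p := by
        refine Real.rpow_le_rpow infDist_nonneg ?_ (by linarith)
        simpa [mulVec, dotProduct] using (convexOn_infDist hK).map_sum_le (t := univ) (w := Q i)
          (p := z) (fun j _ => nonneg_of_mem_rowStochastic hQ) (hrow i) fun _ _ => Set.mem_univ _
    _ ≤ ∑ j, Q i j * d j ^ p :=
        Real.rpow_arith_mean_le_arith_mean_rpow univ (Q i) d
          (fun j _ => nonneg_of_mem_rowStochastic hQ) (hrow i) (fun _ _ => infDist_nonneg) hp
  have hcol' (j : ι) : (∑ i, Q i j) * d j ^ p ≤ d j ^ p := by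
    by_cases hj : z j ∈ K
    · simp [d, infDist_zero_of_mem hj, Real.zero_rpow (by linarith : p ≠ 0)]
    · exact mul_le_of_le_one_left (Real.rpow_nonneg infDist_nonneg p) (hcol j hj)
  calc ∑ i, infDist ((Q *ᵥ z) i) K ^ p ≤ ∑ i, ∑ j, Q i j * d j ^ p :=
        sum_le_sum fun i _ => hpoint i
    _ = ∑ j, (∑ i, Q i j) * d j ^ p := by rw [sum_comm]; simp_rw [sum_mul]
    _ ≤ ∑ j, d j ^ p := sum_le_sum fun j _ => hcol' j

theorem sum_apply_le_one_of_isSymm_toBlock {Q : Matrix ι ι ℝ} (hQ : Q ∈ rowStochastic ℝ ι)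
    {p : ι → Prop} [DecidablePred p] (hQ₂₁ : Q.toBlock (fun i => ¬ p i) p = 0)
    (hQ₁₁ : (Q.toBlock p p).IsSymm) {j : ι} (hj : p j) :
    ∑ i, Q i j ≤ 1 := calc
  ∑ i, Q i j = ∑ i ∈ univ.filter p, Q i j := by
      refine (sum_filter_of_ne fun i _ hQij => ?_).symm
      by_contra hi
      exact hQij (congrFun (congrFun hQ₂₁ ⟨i, hi⟩) ⟨j, hj⟩)
  _ = ∑ i ∈ univ.filter p, Q j i :=
      sum_congr rfl fun i hi => hQ₁₁.apply ⟨j, hj⟩ ⟨i, (mem_filter.1 hi).2⟩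
  _ ≤ ∑ i, Q j i :=
      sum_le_sum_of_subset_of_nonneg (subset_univ _) fun _ _ _ => nonneg_of_mem_rowStochastic hQ
  _ = 1 := sum_row_of_mem_rowStochastic hQ j

/-- The matrix `L` of the paper: the Laplacian of `W` with the leader rows set to zero. -/
def leaderLaplacian (W : Matrix ι ι ℝ) (S : Finset ι) : Matrix ι ι ℝ :=
  of fun i j => if i ∈ S then 0 else if j = i then ∑ k ∈ univ.erase i, W i k else -W i j

section LeaderLaplacian

variable {W : Matrix ι ι ℝ} {S : Finset ι}

theorem leaderLaplacian_row_eq_zero {i : ι} (hi : i ∈ S) : leaderLaplacian W S i = 0 := by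
  ext j; simp [leaderLaplacian, hi]

theorem leaderLaplacian_mulVec_one : leaderLaplacian W S *ᵥ 1 = 0 := by
  ext i
  by_cases hi : i ∈ S
  · rw [mulVec, leaderLaplacian_row_eq_zero hi, zero_dotProduct, Pi.zero_apply]
  · simp only [mulVec, dotProduct, Pi.one_apply, mul_one, Pi.zero_apply]
    rw [← add_sum_erase _ _ (mem_univ i)]
    simp only [leaderLaplacian, of_apply, hi, if_false, if_true]
    rw [sum_congr rfl fun j hj => if_neg (ne_of_mem_erase hj), sum_neg_distrib, add_neg_cancel]

theorem leaderLaplacian_apply_nonpos (hW : ∀ i j, 0 ≤ W i j) {i j : ι} (hij : i ≠ j) :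
    leaderLaplacian W S i j ≤ 0 := by
  simp only [leaderLaplacian, of_apply, hij.symm, if_false]
  split_ifs
  exacts [le_rfl, neg_nonpos.2 (hW i j)]

theorem isSymm_toBlock_leaderLaplacian (hW : ∀ i j, W i j = W j i) :
    ((leaderLaplacian W S).toBlock (· ∉ S) (· ∉ S)).IsSymm := by
  refine IsSymm.ext fun ⟨i, hi⟩ ⟨j, hj⟩ => ?_
  simp only [toBlock_apply, leaderLaplacian, of_apply, hi, hj, if_false]
  rcases eq_or_ne j i with rfl | hji
  · rfl
  · rw [if_neg hji, if_neg hji.symm, hW]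

theorem exp_neg_smul_leaderLaplacian_mem_rowStochastic (hW : ∀ i j, 0 ≤ W i j) {s : ℝ}
    (hs : 0 ≤ s) : exp ((-s) • leaderLaplacian W S) ∈ rowStochastic ℝ ι :=
  Matrix.exp_mem_rowStochastic
    (fun _ _ hij => mul_nonneg_of_nonpos_of_nonpos (neg_nonpos.2 hs)
      (leaderLaplacian_apply_nonpos hW hij))
    (by rw [smul_mulVec, leaderLaplacian_mulVec_one, smul_zero])

theorem exp_neg_smul_leaderLaplacian_row_of_mem (s : ℝ) {i : ι} (hi : i ∈ S) :
    exp ((-s) • leaderLaplacian W S) i = (1 : Matrix ι ι ℝ) i :=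
  exp_row_of_row_eq_zero <| funext fun j => by
    simp [congrFun (leaderLaplacian_row_eq_zero hi) j]

theorem sum_exp_neg_smul_leaderLaplacian_apply_le_one (hW_nonneg : ∀ i j, 0 ≤ W i j)
    (hW_symm : ∀ i j, W i j = W j i) {s : ℝ} (hs : 0 ≤ s) {j : ι} (hj : j ∉ S) :
    ∑ i, exp ((-s) • leaderLaplacian W S) i j ≤ 1 := by
  have hleaders (i : ι) (hi : ¬ i ∉ S) : leaderLaplacian W S i = 0 :=
    leaderLaplacian_row_eq_zero (not_not.1 hi)
  have hblock : ((-s) • leaderLaplacian W S).toBlock (fun i => ¬ i ∉ S) (· ∉ S) = 0 := by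
    ext ⟨i, hi⟩ ⟨k, _⟩
    simp [congrFun (hleaders i hi) k]
  refine sum_apply_le_one_of_isSymm_toBlock (p := (· ∉ S))
    (exp_neg_smul_leaderLaplacian_mem_rowStochastic hW_nonneg hs) ?_ ?_ hj
  · ext ⟨i, hi⟩ ⟨k, hk⟩
    rw [toBlock_apply, exp_neg_smul_leaderLaplacian_row_of_mem s (not_not.1 hi)]
    exact one_apply_ne (ne_of_mem_of_not_mem (not_not.1 hi) hk)
  · rw [toBlock_exp_self hblock]
    exact ((isSymm_toBlock_leaderLaplacian hW_symm).smul (-s)).exp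

end LeaderLaplacian

theorem convergence_error_monotone_general {n : ℕ}
    (W : Matrix (Fin n) (Fin n) ℝ) (S : Finset (Fin n))
    (hW_nonneg : ∀ i j, 0 ≤ W i j) (hW_symm : ∀ i j, W i j = W j i)
    (x0 : Fin n → ℝ) (p : ℝ) (hp : 1 ≤ p)
    (L : Matrix (Fin n) (Fin n) ℝ)
    (hL : ∀ i j, L i j =
      if i ∈ S then 0
      else if j = i then ∑ k ∈ Finset.univ.erase i, W i k
      else -W i j)
    (x : ℝ → Fin n → ℝ)
    (hx : ∀ t : ℝ, x t = (NormedSpace.exp ((-t) • L)).mulVec x0)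
    (f : ℝ → ℝ)
    (hf : ∀ t : ℝ, f t =
      (∑ i, sInf ((fun y => |x t i - y| ^ p) '' (convexHull ℝ (x0 '' ↑S)))) ^ (1 / p)) :
    ∀ t₀ t : ℝ, 0 < t₀ → t₀ ≤ t → f t ≤ f t₀ := by
  intro t₀ t _ ht
  obtain rfl : L = leaderLaplacian W S := ext hL
  set K := convexHull ℝ (x0 '' S)
  have hK : IsCompact K := (S.finite_toSet.image x0).isCompact_convexHull ℝ
  set Q := exp ((-(t - t₀)) • leaderLaplacian W S)
  have hs : 0 ≤ t - t₀ := sub_nonneg.2 ht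
  have hflow : x t = Q *ᵥ x t₀ := by
    rw [hx, hx, mulVec_mulVec, ← exp_add_of_commute _ _
      (((Commute.refl _).smul_left _).smul_right _), ← add_smul,
      show -(t - t₀) + -t₀ = -t by ring]
  have hleader (j : Fin n) (hj : j ∈ S) : x t₀ j = x0 j := by
    rw [hx, mulVec, exp_neg_smul_leaderLaplacian_row_of_mem t₀ hj, ← mulVec, one_mulVec]
  have herror (τ : ℝ) : f τ = (∑ i, infDist (x τ i) K ^ p) ^ (1 / p) := by
    simp only [hf, ← Real.dist_eq, sInf_image_dist_rpow hK (by linarith : 0 < p)]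
  rw [herror, herror, hflow]
  refine Real.rpow_le_rpow (sum_nonneg fun _ _ => Real.rpow_nonneg infDist_nonneg p) ?_
    (by positivity)
  refine sum_infDist_mulVec_rpow_le (convex_convexHull ℝ _) hp
    (exp_neg_smul_leaderLaplacian_mem_rowStochastic hW_nonneg hs) fun j hj => ?_
  refine sum_exp_neg_smul_leaderLaplacian_apply_le_one hW_nonneg hW_symm hs fun hjS => hj ?_
  rw [hleader j hjS]
  exact subset_convexHull ℝ _ (Set.mem_image_of_mem x0 hjS)

/-- Lemma 2 of the paper: for a symmetric nonnegative weight matrix `W`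
and leader set `S`, the convergence error
`f_t(S) = (Σ_i min_{y∈Ā} |x_i(t) - y|^p)^{1/p}` of the dynamics `ẋ = -Lx`
(leader states held fixed) is nonincreasing in `t`: `f_t(S) ≤ f_{t₀}(S)` for `t ≥ t₀ > 0`. -/
theorem convergence_error_monotone {n : ℕ}
    (W : Matrix (Fin n) (Fin n) ℝ) (S : Finset (Fin n)) (hS : S.Nonempty)
    (hW_nonneg : ∀ i j, 0 ≤ W i j) (hW_symm : ∀ i j, W i j = W j i)
    (x0 : Fin n → ℝ) (p : ℝ) (hp : 1 ≤ p)
    (L : Matrix (Fin n) (Fin n) ℝ)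
    (hL : ∀ i j, L i j =
      if i ∈ S then 0
      else if j = i then ∑ k ∈ Finset.univ.erase i, W i k
      else -W i j)
    (x : ℝ → Fin n → ℝ)
    (hx : ∀ t : ℝ, x t = (NormedSpace.exp ((-t) • L)).mulVec x0)
    (f : ℝ → ℝ)
    (hf : ∀ t : ℝ, f t =
      (∑ i, sInf ((fun y => |x t i - y| ^ p) '' (convexHull ℝ (x0 '' ↑S)))) ^ (1 / p)) :
    ∀ t₀ t : ℝ, 0 < t₀ → t₀ ≤ t → f t ≤ f t₀ :=
  convergence_error_monotone_general W S hW_nonneg hW_symm x0 p hp L hL x hx f hf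
end
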